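/- arXiv:1008.1029 — 3 statements merged into one kernel-verified Lean document; each statement's English description precedes it below -/
import Mathlib

section
/- Let A be an m×m matrix over F₂ and G_A ≤ V(Q_A) the gauge group of its generalized Bacon–Shor code. Then the centralizer C(G_A) equals the linear span of the row operators R_1, …, R_m together with the column operators C_1, …, C_m. -/
set_option linter.unusedSectionVars false

open Finset Matrix

abbrev F2 : Type := ZMod 2

abbrev PauliSpace (Q : Type) := Q → F2 × F2

section Pauli

variable {Q : Type} [Fintype Q] [DecidableEq Q]

/-- Support of a Pauli vector. -/
def psupp (v : PauliSpace Q) : Finset Q := Finset.univ.filter (fun q => v q ≠ (0, 0))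

/-- Weight of a Pauli vector. -/
def pwt (v : PauliSpace Q) : ℕ := (psupp v).card

/-- The symplectic form. -/
def omegaF (u v : PauliSpace Q) : F2 :=
  ∑ q, ((u q).1 * (v q).2 + (u q).2 * (v q).1)

lemma omegaF_add_left (u v w : PauliSpace Q) :
    omegaF (u + v) w = omegaF u w + omegaF v w := by
  simp only [omegaF, Pi.add_apply, Prod.fst_add, Prod.snd_add, ← Finset.sum_add_distrib]
  exact Finset.sum_congr rfl (fun q _ => by ring)

lemma omegaF_smul_left (c : F2) (u w : PauliSpace Q) :
    omegaF (c • u) w = c * omegaF u w := by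
  simp only [omegaF, Pi.smul_apply, Prod.smul_fst, Prod.smul_snd, smul_eq_mul,
    Finset.mul_sum]
  exact Finset.sum_congr rfl (fun q _ => by ring)

/-- Centralizer of a subspace w.r.t. the symplectic form. -/
def pcent (G : Submodule F2 (PauliSpace Q)) : Submodule F2 (PauliSpace Q) where
  carrier := {v | ∀ g ∈ G, omegaF v g = 0}
  zero_mem' := by
    intro g _
    simp [omegaF]
  add_mem' := by
    intro a b ha hb g hg
    rw [omegaF_add_left, ha g hg, hb g hg, add_zero]
  smul_mem' := by
    intro c a ha g hg
    rw [omegaF_smul_left, ha g hg, mul_zero]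

/-- Stabilizer group of a gauge group. -/
def pstab (G : Submodule F2 (PauliSpace Q)) : Submodule F2 (PauliSpace Q) := G ⊓ pcent G

/-- Single-qubit Pauli X vector. -/
def Xop (c : Q) : PauliSpace Q := fun q => if q = c then (1, 0) else (0, 0)

/-- Single-qubit Pauli Z vector. -/
def Zop (c : Q) : PauliSpace Q := fun q => if q = c then (0, 1) else (0, 0)

/-- The set of weights of dressed logical operators; its infimum is the distance. -/
def distSet (G : Submodule F2 (PauliSpace Q)) : Set ℕ :=
  {w | ∃ v, v ∈ pcent (pstab G) ∧ v ∉ G ∧ pwt v = w}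

/-- Pauli vectors supported in `M`. -/
def PMod (M : Finset Q) : Submodule F2 (PauliSpace Q) where
  carrier := {v | ∀ q, q ∉ M → v q = 0}
  zero_mem' := by intro q _; rfl
  add_mem' := by
    intro a b ha hb q hq
    simp [Pi.add_apply, ha q hq, hb q hq]
  smul_mem' := by
    intro c a ha q hq
    simp [Pi.smul_apply, ha q hq]

/-- Projection onto the qubits in `M`. -/
def projL (M : Finset Q) : PauliSpace Q →ₗ[F2] PauliSpace Q where
  toFun v := fun q => if q ∈ M then v q else 0
  map_add' a b := by funext q; by_cases h : q ∈ M <;> simp [h]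
  map_smul' c a := by funext q; by_cases h : q ∈ M <;> simp [h]

/-- Number of independent dressed logical operators supported in `M`. -/
noncomputable def lM (G : Submodule F2 (PauliSpace Q)) (M : Finset Q) : ℕ :=
  Module.finrank F2 ↥(pcent ((pstab G).map (projL M)) ⊓ PMod M)
    - Module.finrank F2 ↥(G ⊓ PMod M)

/-- Number of independent bare logical operators supported in `M`. -/
noncomputable def lbareM (G : Submodule F2 (PauliSpace Q)) (M : Finset Q) : ℕ :=
  Module.finrank F2 ↥(pcent (G.map (projL M)) ⊓ PMod M)
    - Module.finrank F2 ↥(pstab G ⊓ PMod M)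

end Pauli

section Classical

variable {ι : Type} [Fintype ι] [DecidableEq ι]

/-- Hamming weight of a classical vector. -/
def hwt (v : ι → F2) : ℕ := (Finset.univ.filter (fun i => v i ≠ 0)).card

/-- Row space of a matrix. -/
def Crow (A : Matrix ι ι F2) : Submodule F2 (ι → F2) := Submodule.span F2 (Set.range A)

/-- Column space of a matrix. -/
def Ccol (A : Matrix ι ι F2) : Submodule F2 (ι → F2) := Submodule.span F2 (Set.range Aᵀ)

/-- Minimum distance of the row space. -/
noncomputable def drow (A : Matrix ι ι F2) : ℕ := sInf {w | ∃ v ∈ Crow A, v ≠ 0 ∧ hwt v = w}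

/-- Minimum distance of the column space. -/
noncomputable def dcol (A : Matrix ι ι F2) : ℕ := sInf {w | ∃ v ∈ Ccol A, v ≠ 0 ∧ hwt v = w}

/-- Number of nonzero entries of a matrix. -/
def nnz (A : Matrix ι ι F2) : ℕ :=
  (Finset.univ.filter (fun p : ι × ι => A p.1 p.2 ≠ 0)).card

end Classical

section BaconShor

variable {m : ℕ}

/-- Qubit set of the generalized Bacon-Shor code: cells with `A i j = 1`. -/
abbrev QA (A : Matrix (Fin m) (Fin m) F2) : Type := {c : Fin m × Fin m // A c.1 c.2 = 1}

/-- Generators of the gauge group. -/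
def gaugeSet (A : Matrix (Fin m) (Fin m) F2) : Set (PauliSpace (QA A)) :=
  {v | ∃ c c' : QA A, c ≠ c' ∧
    ((c.1.1 = c'.1.1 ∧ v = Xop c + Xop c') ∨ (c.1.2 = c'.1.2 ∧ v = Zop c + Zop c'))}

/-- Gauge group of the generalized Bacon-Shor code. -/
def gaugeBS (A : Matrix (Fin m) (Fin m) F2) : Submodule F2 (PauliSpace (QA A)) :=
  Submodule.span F2 (gaugeSet A)

/-- The row operator `R i`. -/
def Rop (A : Matrix (Fin m) (Fin m) F2) (i : Fin m) : PauliSpace (QA A) :=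
  ∑ c ∈ Finset.univ.filter (fun c : QA A => c.1.1 = i), Zop c

/-- The column operator `C j`. -/
def Cop (A : Matrix (Fin m) (Fin m) F2) (j : Fin m) : PauliSpace (QA A) :=
  ∑ c ∈ Finset.univ.filter (fun c : QA A => c.1.2 = j), Xop c

/-- X-type operator parameterized by a binary vector. -/
def PXop (A : Matrix (Fin m) (Fin m) F2) (x : Fin m → F2) : PauliSpace (QA A) :=
  ∑ j, x j • Cop A j

/-- Z-type operator parameterized by a binary vector. -/
def PZop (A : Matrix (Fin m) (Fin m) F2) (z : Fin m → F2) : PauliSpace (QA A) :=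
  ∑ i, z i • Rop A i

end BaconShor

/-- Binary entropy. -/
noncomputable def H2 (p : ℝ) : ℝ := -p * Real.logb 2 p - (1 - p) * Real.logb 2 (1 - p)

/-!
A vector `v` commutes with the gauge generator `X_c + X_{c'}` exactly when its `Z`-components at
`c` and `c'` agree, and with `Z_c + Z_{c'}` exactly when its `X`-components agree. So `v` lies in
the centralizer iff its `Z`-part is constant along each row of `A` and its `X`-part is constant
along each column, i.e. iff `v = ∑ z_i R_i + ∑ x_j C_j` for some binary vectors `z` and `x`.
-/

open Function

section Symplectic

variable {Q : Type} [Fintype Q] [DecidableEq Q]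

lemma omegaF_comm (u v : PauliSpace Q) : omegaF u v = omegaF v u :=
  Finset.sum_congr rfl fun _ _ => by ring

lemma omegaF_add_right (u v w : PauliSpace Q) :
    omegaF u (v + w) = omegaF u v + omegaF u w := by
  rw [omegaF_comm, omegaF_add_left, omegaF_comm v, omegaF_comm w]

lemma omegaF_smul_right (c : F2) (u w : PauliSpace Q) :
    omegaF u (c • w) = c * omegaF u w := by
  rw [omegaF_comm, omegaF_smul_left, omegaF_comm]

lemma omegaF_zero_right (u : PauliSpace Q) : omegaF u 0 = 0 := by
  simp [omegaF]

lemma mem_pcent_span_iff {S : Set (PauliSpace Q)} {v : PauliSpace Q} :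
    v ∈ pcent (Submodule.span F2 S) ↔ ∀ s ∈ S, omegaF v s = 0 := by
  refine ⟨fun hv s hs => hv s (Submodule.subset_span hs), fun h g hg => ?_⟩
  induction hg using Submodule.span_induction with
  | mem s hs => exact h s hs
  | zero => exact omegaF_zero_right v
  | add a b _ _ ha hb => rw [omegaF_add_right, ha, hb, add_zero]
  | smul c a _ ha => rw [omegaF_smul_right, ha, mul_zero]

lemma omegaF_Xop (v : PauliSpace Q) (c : Q) : omegaF v (Xop c) = (v c).2 := by
  rw [omegaF, Finset.sum_eq_single_of_mem c (Finset.mem_univ c)]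
  · simp [Xop]
  · intro q _ hq
    simp [Xop, hq]

lemma omegaF_Zop (v : PauliSpace Q) (c : Q) : omegaF v (Zop c) = (v c).1 := by
  rw [omegaF, Finset.sum_eq_single_of_mem c (Finset.mem_univ c)]
  · simp [Zop]
  · intro q _ hq
    simp [Zop, hq]

lemma omegaF_Xop_add_Xop_eq_zero_iff (v : PauliSpace Q) (c c' : Q) :
    omegaF v (Xop c + Xop c') = 0 ↔ (v c).2 = (v c').2 := by
  rw [omegaF_add_right, omegaF_Xop, omegaF_Xop, CharTwo.add_eq_zero]

lemma omegaF_Zop_add_Zop_eq_zero_iff (v : PauliSpace Q) (c c' : Q) :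
    omegaF v (Zop c + Zop c') = 0 ↔ (v c).1 = (v c').1 := by
  rw [omegaF_add_right, omegaF_Zop, omegaF_Zop, CharTwo.add_eq_zero]

end Symplectic

section BaconShor

variable {m : ℕ} (A : Matrix (Fin m) (Fin m) F2)

lemma mem_pcent_gaugeBS_iff (v : PauliSpace (QA A)) :
    v ∈ pcent (gaugeBS A) ↔
      (fun c => (v c).2).FactorsThrough (fun c : QA A => c.1.1) ∧
        (fun c => (v c).1).FactorsThrough (fun c : QA A => c.1.2) := by
  rw [gaugeBS, mem_pcent_span_iff]
  constructor
  · intro hv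
    refine ⟨fun c c' hrow => ?_, fun c c' hcol => ?_⟩ <;> obtain rfl | hne := eq_or_ne c c'
    · rfl
    · exact (omegaF_Xop_add_Xop_eq_zero_iff v c c').1 (hv _ ⟨c, c', hne, .inl ⟨hrow, rfl⟩⟩)
    · rfl
    · exact (omegaF_Zop_add_Zop_eq_zero_iff v c c').1 (hv _ ⟨c, c', hne, .inr ⟨hcol, rfl⟩⟩)
  · rintro ⟨hrow, hcol⟩ s ⟨c, c', -, ⟨hcc', rfl⟩ | ⟨hcc', rfl⟩⟩
    · exact (omegaF_Xop_add_Xop_eq_zero_iff v c c').2 (hrow hcc')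
    · exact (omegaF_Zop_add_Zop_eq_zero_iff v c c').2 (hcol hcc')

lemma Rop_apply (i : Fin m) (c : QA A) :
    Rop A i c = if c.1.1 = i then ((0 : F2), (1 : F2)) else 0 := by
  simp only [Rop, Finset.sum_apply, Zop, Prod.mk_zero_zero, Finset.sum_ite_eq,
    Finset.mem_filter, Finset.mem_univ, true_and]

lemma Cop_apply (j : Fin m) (c : QA A) :
    Cop A j c = if c.1.2 = j then ((1 : F2), (0 : F2)) else 0 := by
  simp only [Cop, Finset.sum_apply, Xop, Prod.mk_zero_zero, Finset.sum_ite_eq,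
    Finset.mem_filter, Finset.mem_univ, true_and]

lemma PZop_apply (z : Fin m → F2) (c : QA A) : PZop A z c = (0, z c.1.1) := by
  rw [PZop, Finset.sum_apply, Finset.sum_eq_single_of_mem c.1.1 (Finset.mem_univ _)]
  · simp [Rop_apply]
  · intro i _ hi
    simp [Rop_apply, Ne.symm hi]

lemma PXop_apply (x : Fin m → F2) (c : QA A) : PXop A x c = (x c.1.2, 0) := by
  rw [PXop, Finset.sum_apply, Finset.sum_eq_single_of_mem c.1.2 (Finset.mem_univ _)]
  · simp [Cop_apply]
  · intro j _ hj
    simp [Cop_apply, Ne.symm hj]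

lemma Rop_mem_pcent_gaugeBS (i : Fin m) : Rop A i ∈ pcent (gaugeBS A) := by
  rw [mem_pcent_gaugeBS_iff]
  refine ⟨fun c c' hrow => ?_, fun c c' _ => ?_⟩
  · simp only [Rop_apply, hrow]
  · simp only [Rop_apply]
    split_ifs <;> rfl

lemma Cop_mem_pcent_gaugeBS (j : Fin m) : Cop A j ∈ pcent (gaugeBS A) := by
  rw [mem_pcent_gaugeBS_iff]
  refine ⟨fun c c' _ => ?_, fun c c' hcol => ?_⟩
  · simp only [Cop_apply]
    split_ifs <;> rfl
  · simp only [Cop_apply, hcol]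

lemma PXop_add_PZop_mem_span (x z : Fin m → F2) :
    PXop A x + PZop A z ∈ Submodule.span F2 (Set.range (Rop A) ∪ Set.range (Cop A)) :=
  Submodule.add_mem _
    (Submodule.sum_mem _ fun j _ =>
      Submodule.smul_mem _ _ (Submodule.subset_span (.inr ⟨j, rfl⟩)))
    (Submodule.sum_mem _ fun i _ =>
      Submodule.smul_mem _ _ (Submodule.subset_span (.inl ⟨i, rfl⟩)))

lemma eq_PXop_add_PZop_of_factorsThrough {v : PauliSpace (QA A)}
    (hrow : (fun c => (v c).2).FactorsThrough (fun c : QA A => c.1.1))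
    (hcol : (fun c => (v c).1).FactorsThrough (fun c : QA A => c.1.2)) :
    v = PXop A (extend (fun c : QA A => c.1.2) (fun c => (v c).1) 0)
      + PZop A (extend (fun c : QA A => c.1.1) (fun c => (v c).2) 0) := by
  funext c
  rw [Pi.add_apply, PXop_apply, PZop_apply, hcol.extend_apply, hrow.extend_apply]
  simp

end BaconShor

/-- The centralizer of the gauge group of a generalized Bacon-Shor code is spanned by
the row operators and the column operators. -/
theorem centralizer_eq_span_row_col {m : ℕ} (A : Matrix (Fin m) (Fin m) F2) :
    pcent (gaugeBS A) = Submodule.span F2 (Set.range (Rop A) ∪ Set.range (Cop A)) := by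
  apply le_antisymm
  · intro v hv
    obtain ⟨hrow, hcol⟩ := (mem_pcent_gaugeBS_iff A v).1 hv
    rw [eq_PXop_add_PZop_of_factorsThrough A hrow hcol]
    exact PXop_add_PZop_mem_span A _ _
  · rw [Submodule.span_le]
    rintro _ (⟨i, rfl⟩ | ⟨j, rfl⟩)
    · exact Rop_mem_pcent_gaugeBS A i
    · exact Cop_mem_pcent_gaugeBS A j
end

section
/- Let A be an m×m matrix over F₂ and G_A the gauge group of its generalized Bacon–Shor code. Then for every x ∈ F₂^m, the minimum over g ∈ G_A of the weight |P^X(x) + g| equals the Hamming weight of the vector Ax; analogously, for every z ∈ F₂^m, the minimum over g ∈ G_A of |P^Z(z) + g| equals the Hamming weight of Aᵀz. -/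
set_option linter.unusedSectionVars false

open Finset Matrix

/-!
The X-components of a gauge operator sum to zero along every row of `A`, and the Z-components
along every column: an X-type generator puts two X's into one row, a Z-type one two Z's into one
column.
Conversely an X-type operator with vanishing row sums lies in the gauge group: within a row,
pair every qubit with one fixed qubit of that row. The row sums of `P^X(x)` are the entries of
`Ax`, so any dressed version `P^X(x) + g` has a qubit in each row where `Ax` is nonzero, and a
single X on one qubit of each such row has exactly these row sums, hence is gauge equivalent to
`P^X(x)`. The Z-type statement is the same argument with columns and `Aᵀ`.
-/

section FiberSum

variable {Q ι : Type} [Fintype Q] [DecidableEq ι] (f : Q → ι)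

def fiberSum : (Q → F2) →ₗ[F2] ι → F2 where
  toFun u i := ∑ q with f q = i, u q
  map_add' u v := by ext i; simp [Finset.sum_add_distrib]
  map_smul' a u := by ext i; simp [Finset.mul_sum]

lemma fiberSum_apply (u : Q → F2) (i : ι) : fiberSum f u i = ∑ q with f q = i, u q := rfl

lemma fiberSum_single [DecidableEq Q] (c : Q) (a : F2) :
    fiberSum f (Pi.single c a) = Pi.single (f c) a := by
  ext i
  simp [fiberSum_apply, Pi.single_apply, eq_comm]

lemma exists_eq_of_fiberSum_ne_zero {u : Q → F2} {i : ι} (h : fiberSum f u i ≠ 0) :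
    ∃ q, f q = i :=
  let ⟨q, hq, _⟩ := Finset.exists_ne_zero_of_sum_ne_zero h
  ⟨q, (Finset.mem_filter.mp hq).2⟩

lemma hwt_fiberSum_le [Fintype ι] (u : Q → F2) :
    hwt (fiberSum f u) ≤ hwt u := by
  refine Finset.card_le_card_of_surjOn f fun i hi => ?_
  obtain ⟨q, hq, hne⟩ := Finset.exists_ne_zero_of_sum_ne_zero (Finset.mem_filter.mp hi).2
  exact ⟨q, by simpa [hwt] using hne, (Finset.mem_filter.mp hq).2⟩

lemma mem_of_fiberSum_eq_zero [DecidableEq Q] [Fintype ι] {S : Submodule F2 (Q → F2)}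
    (hS : ∀ c c', c ≠ c' → f c = f c' → Pi.single c 1 + Pi.single c' 1 ∈ S)
    {u : Q → F2} (hu : fiberSum f u = 0) : u ∈ S := by
  rw [← Finset.univ_sum_single u, ← Finset.sum_fiberwise _ f]
  refine Submodule.sum_mem _ fun i _ => ?_
  rcases Finset.eq_empty_or_nonempty {q | f q = i} with hempty | ⟨q₀, hq₀⟩
  · simp [hempty]
  rw [Finset.mem_filter] at hq₀
  have hpair : ∀ q, f q = i → Pi.single q 1 + Pi.single q₀ 1 ∈ S := fun q hq => by
    by_cases hqq₀ : q = q₀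
    · rw [hqq₀, ZModModule.add_self]
      exact S.zero_mem
    · exact hS q q₀ hqq₀ (hq.trans hq₀.2.symm)
  have hsplit : ∑ q with f q = i, Pi.single q (u q) = ∑ q with f q = i,
      u q • (Pi.single q 1 + Pi.single q₀ 1) + fiberSum f u i • Pi.single q₀ 1 := by
    simp only [fiberSum_apply, Finset.sum_smul, smul_add, Finset.sum_add_distrib, add_assoc,
      ZModModule.add_self, add_zero, ← Pi.single_smul, smul_eq_mul, mul_one]
  rw [hsplit, hu, Pi.zero_apply, zero_smul, add_zero]
  exact Submodule.sum_mem _ fun q hq => S.smul_mem _ (hpair q (Finset.mem_filter.mp hq).2)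

lemma exists_fiberSum_eq_and_hwt_eq [DecidableEq Q] [Fintype ι] (s : ι → F2)
    (hs : ∀ i, s i ≠ 0 → ∃ q, f q = i) : ∃ v, fiberSum f v = s ∧ hwt v = hwt s := by
  by_cases hzero : s = 0
  · exact ⟨0, by simp [hzero], by simp [hzero, hwt]⟩
  obtain ⟨i, hi⟩ := Function.ne_iff.mp hzero
  have : Nonempty Q := ⟨(hs i hi).choose⟩
  choose! r hr using hs
  refine ⟨fun q => if r (f q) = q then s (f q) else 0, funext fun i => ?_, ?_⟩
  · rw [fiberSum_apply, Finset.sum_congr rfl fun q hq => by rw [(Finset.mem_filter.mp hq).2],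
      Finset.sum_ite_eq]
    by_cases hi : s i = 0
    · simp [hi]
    · simp [hr i hi]
  · refine Finset.card_nbij' f r ?_ ?_ ?_ ?_ <;> intro q hq <;> simp_all

end FiberSum

section PauliType

lemma compLeft_compLeft_of_comp_eq_id {R M₁ M₂ : Type*} [Semiring R] [AddCommMonoid M₁]
    [AddCommMonoid M₂] [Module R M₁] [Module R M₂] {p : M₂ →ₗ[R] M₁} {e : M₁ →ₗ[R] M₂}
    (h : p ∘ₗ e = LinearMap.id) (I : Type*) (v : I → M₁) : p.compLeft I (e.compLeft I v) = v :=
  funext fun i => LinearMap.congr_fun h (v i)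

lemma compLeft_compLeft_of_comp_eq_zero {R M₁ M₂ M₃ : Type*} [Semiring R] [AddCommMonoid M₁]
    [AddCommMonoid M₂] [AddCommMonoid M₃] [Module R M₁] [Module R M₂] [Module R M₃]
    {p : M₂ →ₗ[R] M₃} {e : M₁ →ₗ[R] M₂} (h : p ∘ₗ e = 0) (I : Type*) (v : I → M₁) :
    p.compLeft I (e.compLeft I v) = 0 :=
  funext fun i => LinearMap.congr_fun h (v i)

variable {Q : Type} [Fintype Q]

lemma hwt_compLeft_le (p : F2 × F2 →ₗ[F2] F2) (v : PauliSpace Q) :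
    hwt (p.compLeft Q v) ≤ pwt v :=
  Finset.card_le_card <| Finset.monotone_filter_right _ fun q _ hp hv =>
    hp (by simp [hv, ← Prod.zero_eq_mk])

lemma pwt_compLeft {e : F2 →ₗ[F2] F2 × F2} (he : Function.Injective e) (u : Q → F2) :
    pwt (e.compLeft Q u) = hwt u := by
  simp [pwt, psupp, hwt, ← Prod.zero_eq_mk, he.ne_iff' (map_zero e)]

/-- `(e, p)` is `(inl, fst)` for X-type and `(inr, snd)` for Z-type operators. -/
theorem sInf_pwt_compLeft_add_eq_hwt_fiberSum [DecidableEq Q] {ι : Type} [Fintype ι] [DecidableEq ι]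
    {G : Submodule F2 (PauliSpace Q)} {f : Q → ι}
    {e : F2 →ₗ[F2] F2 × F2} {p : F2 × F2 →ₗ[F2] F2} (hpe : p ∘ₗ e = LinearMap.id)
    (hG : ∀ g ∈ G, fiberSum f (p.compLeft Q g) = 0)
    (hpair : ∀ c c', c ≠ c' → f c = f c' → e.compLeft Q (Pi.single c 1 + Pi.single c' 1) ∈ G)
    (u : Q → F2) :
    sInf {w | ∃ g ∈ G, pwt (e.compLeft Q u + g) = w} = hwt (fiberSum f u) := by
  refine IsLeast.csInf_eq ⟨?_, ?_⟩
  · obtain ⟨v, hv, hwt_v⟩ :=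
      exists_fiberSum_eq_and_hwt_eq f (fiberSum f u) fun _ => exists_eq_of_fiberSum_ne_zero f
    have hmem : v - u ∈ G.comap (e.compLeft Q) :=
      mem_of_fiberSum_eq_zero f hpair (by rw [map_sub, hv, sub_self])
    refine ⟨e.compLeft Q (v - u), hmem, ?_⟩
    have he : Function.Injective e := Function.LeftInverse.injective (LinearMap.congr_fun hpe)
    rw [← map_add, add_sub_cancel, pwt_compLeft he, hwt_v]
  · rintro _ ⟨g, hg, rfl⟩
    calc hwt (fiberSum f u)
        = hwt (fiberSum f (p.compLeft Q (e.compLeft Q u + g))) := by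
          rw [map_add, map_add, compLeft_compLeft_of_comp_eq_id hpe, hG g hg, add_zero]
      _ ≤ hwt (p.compLeft Q (e.compLeft Q u + g)) := hwt_fiberSum_le f _
      _ ≤ pwt (e.compLeft Q u + g) := hwt_compLeft_le p _

end PauliType

section BaconShor

lemma Xop_eq_compLeft {Q : Type} [DecidableEq Q] (c : Q) :
    Xop c = (LinearMap.inl F2 F2 F2).compLeft Q (Pi.single c 1) := by
  ext q <;> by_cases h : q = c <;> simp [Xop, h]

lemma Zop_eq_compLeft {Q : Type} [DecidableEq Q] (c : Q) :
    Zop c = (LinearMap.inr F2 F2 F2).compLeft Q (Pi.single c 1) := by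
  ext q <;> by_cases h : q = c <;> simp [Zop, h]

variable {m : ℕ} (A : Matrix (Fin m) (Fin m) F2)

lemma sum_QA_eq_sum_smul {M : Type} [AddCommMonoid M] [Module F2 M] (F : Fin m × Fin m → M) :
    ∑ c : QA A, F c.1 = ∑ p, A p.1 p.2 • F p := by
  have h01 : ∀ (a : F2) (y : M), a • y = if a = 1 then y else 0 := by
    intro a y
    rcases (by decide : ∀ a : F2, a = 0 ∨ a = 1) a with rfl | rfl <;> simp
  simp only [h01, ← Finset.sum_filter]
  exact (Finset.sum_subtype _ (by simp) F).symm

lemma fiberSum_row (x : Fin m → F2) :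
    fiberSum (fun c : QA A => c.1.1) (fun c => x c.1.2) = A *ᵥ x := by
  ext i
  rw [fiberSum_apply, Finset.sum_filter,
    sum_QA_eq_sum_smul A fun p => if p.1 = i then x p.2 else 0]
  simp [Fintype.sum_prod_type, Matrix.mulVec, dotProduct]

lemma fiberSum_col (z : Fin m → F2) :
    fiberSum (fun c : QA A => c.1.2) (fun c => z c.1.1) = Aᵀ *ᵥ z := by
  ext j
  rw [fiberSum_apply, Finset.sum_filter,
    sum_QA_eq_sum_smul A fun p => if p.2 = j then z p.1 else 0]
  simp [Fintype.sum_prod_type, Matrix.mulVec, dotProduct]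

lemma PXop_eq_compLeft (x : Fin m → F2) :
    PXop A x = (LinearMap.inl F2 F2 F2).compLeft (QA A) (fun c => x c.1.2) := by
  simp only [PXop, Cop, Xop_eq_compLeft, ← map_sum, ← map_smul, Finset.smul_sum]
  congr 1
  rw [← Finset.univ_sum_single (fun c : QA A => x c.1.2),
    ← Finset.sum_fiberwise Finset.univ (fun c : QA A => c.1.2) fun c => Pi.single c (x c.1.2)]
  refine Finset.sum_congr rfl fun j _ => Finset.sum_congr rfl fun c hc => ?_
  rw [(Finset.mem_filter.mp hc).2, ← Pi.single_smul, smul_eq_mul, mul_one]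

lemma PZop_eq_compLeft (z : Fin m → F2) :
    PZop A z = (LinearMap.inr F2 F2 F2).compLeft (QA A) (fun c => z c.1.1) := by
  simp only [PZop, Rop, Zop_eq_compLeft, ← map_sum, ← map_smul, Finset.smul_sum]
  congr 1
  rw [← Finset.univ_sum_single (fun c : QA A => z c.1.1),
    ← Finset.sum_fiberwise Finset.univ (fun c : QA A => c.1.1) fun c => Pi.single c (z c.1.1)]
  refine Finset.sum_congr rfl fun i _ => Finset.sum_congr rfl fun c hc => ?_
  rw [(Finset.mem_filter.mp hc).2, ← Pi.single_smul, smul_eq_mul, mul_one]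

lemma fiberSum_row_fst_of_mem_gaugeBS {g : PauliSpace (QA A)} (hg : g ∈ gaugeBS A) :
    fiberSum (fun c : QA A => c.1.1) ((LinearMap.fst F2 F2 F2).compLeft _ g) = 0 := by
  suffices gaugeBS A ≤ LinearMap.ker
      (fiberSum (fun c : QA A => c.1.1) ∘ₗ (LinearMap.fst F2 F2 F2).compLeft _) from this hg
  refine Submodule.span_le.mpr ?_
  rintro _ ⟨c, c', -, ⟨hrow, rfl⟩ | ⟨-, rfl⟩⟩
  · simp [Xop_eq_compLeft, compLeft_compLeft_of_comp_eq_id (LinearMap.fst_comp_inl F2 F2 F2),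
      fiberSum_single, hrow, ZModModule.add_self]
  · simp [Zop_eq_compLeft, compLeft_compLeft_of_comp_eq_zero (LinearMap.fst_comp_inr F2 F2 F2)]

lemma fiberSum_col_snd_of_mem_gaugeBS {g : PauliSpace (QA A)} (hg : g ∈ gaugeBS A) :
    fiberSum (fun c : QA A => c.1.2) ((LinearMap.snd F2 F2 F2).compLeft _ g) = 0 := by
  suffices gaugeBS A ≤ LinearMap.ker
      (fiberSum (fun c : QA A => c.1.2) ∘ₗ (LinearMap.snd F2 F2 F2).compLeft _) from this hg
  refine Submodule.span_le.mpr ?_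
  rintro _ ⟨c, c', -, ⟨-, rfl⟩ | ⟨hcol, rfl⟩⟩
  · simp [Xop_eq_compLeft, compLeft_compLeft_of_comp_eq_zero (LinearMap.snd_comp_inl F2 F2 F2)]
  · simp [Zop_eq_compLeft, compLeft_compLeft_of_comp_eq_id (LinearMap.snd_comp_inr F2 F2 F2),
      fiberSum_single, hcol, ZModModule.add_self]

end BaconShor

/-- The minimum weight of `P^X(x)` modulo the gauge group is the Hamming weight of `Ax`;
the minimum weight of `P^Z(z)` modulo the gauge group is the Hamming weight of `Aᵀz`. -/
theorem min_dressed_weight {m : ℕ} (A : Matrix (Fin m) (Fin m) F2) :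
    (∀ x : Fin m → F2,
      sInf {w | ∃ g ∈ gaugeBS A, pwt (PXop A x + g) = w} = hwt (A.mulVec x)) ∧
    (∀ z : Fin m → F2,
      sInf {w | ∃ g ∈ gaugeBS A, pwt (PZop A z + g) = w} = hwt (Aᵀ.mulVec z)) := by
  refine ⟨fun x => ?_, fun z => ?_⟩
  · rw [PXop_eq_compLeft, ← fiberSum_row]
    refine sInf_pwt_compLeft_add_eq_hwt_fiberSum (LinearMap.fst_comp_inl F2 F2 F2)
      (fun g hg => fiberSum_row_fst_of_mem_gaugeBS A hg) (fun c c' hne hrow => ?_) _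
    rw [map_add, ← Xop_eq_compLeft, ← Xop_eq_compLeft]
    exact Submodule.subset_span ⟨c, c', hne, .inl ⟨hrow, rfl⟩⟩
  · rw [PZop_eq_compLeft, ← fiberSum_col]
    refine sInf_pwt_compLeft_add_eq_hwt_fiberSum (LinearMap.snd_comp_inr F2 F2 F2)
      (fun g hg => fiberSum_col_snd_of_mem_gaugeBS A hg) (fun c c' hne hcol => ?_) _
    rw [map_add, ← Zop_eq_compLeft, ← Zop_eq_compLeft]
    exact Submodule.subset_span ⟨c, c', hne, .inr ⟨hcol, rfl⟩⟩
end

section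
/- For every nonzero m×m matrix A over F₂ with k = rank(A): 2·drow(A)·dcol(A)·(2^k − 1) ≤ |A|·2^k (equivalently, 2·drow(A)·dcol(A)·(1 − 2^{−k}) ≤ |A|). -/
set_option linter.unusedSectionVars false

open Finset Matrix

/-!
Let `r` be the number of nonzero rows of `A`. Each of them lies in `Crow A`, so `r · drow ≤ |A|`.
Double count the weights of the `2 ^ k` codewords of `Ccol A`: a coordinate `i` is a linear
functional on the code, nonzero exactly when row `i` is, and a nonzero functional over `F₂` takes
the value `1` on exactly half of the code. Hence the total weight is `r · 2 ^ (k - 1)`, while it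
is at least `dcol · (2 ^ k - 1)` because every nonzero codeword has weight at least `dcol`.
-/

lemma F2_ne_zero_iff_eq_one (x : F2) : x ≠ 0 ↔ x = 1 := by
  revert x; decide

lemma two_mul_card_filter_ne_zero {V : Type*} [AddGroup V] [Fintype V] (f : V →+ F2)
    (hf : f ≠ 0) : 2 * #{v | f v ≠ 0} = Fintype.card V := by
  obtain ⟨v₁, hv₁⟩ : ∃ v, f v = 1 := by
    obtain ⟨v, hv⟩ := DFunLike.ne_iff.mp hf
    exact ⟨v, (F2_ne_zero_iff_eq_one _).mp hv⟩
  have h_fibers : #{v | f v = 0} = #{v | f v = 1} :=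
    AddMonoidHom.card_fiber_eq_of_mem_range f ⟨0, map_zero f⟩ ⟨v₁, hv₁⟩
  have h_split := card_filter_add_card_filter_not (s := (univ : Finset V)) (fun v => f v ≠ 0)
  simp only [← F2_ne_zero_iff_eq_one] at h_fibers
  simp only [not_not, card_univ] at h_split
  omega

section Weights

variable {ι : Type} [Fintype ι]

lemma sum_hwt_eq_sum_card_filter {α : Type*} (s : Finset α) (g : α → ι → F2) :
    ∑ a ∈ s, hwt (g a) = ∑ i, #{a ∈ s | g a i ≠ 0} :=
  sum_card_bipartiteAbove_eq_sum_card_bipartiteBelow (fun a i => g a i ≠ 0)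

lemma mul_card_sub_one_le_sum_hwt (W : Submodule F2 (ι → F2)) [Fintype W] (d : ℕ)
    (hd : ∀ v ∈ W, v ≠ 0 → d ≤ hwt v) :
    d * (Fintype.card W - 1) ≤ ∑ v : W, hwt (v : ι → F2) :=
  calc d * (Fintype.card W - 1)
      = ∑ _v ∈ univ.erase (0 : W), d := by
        rw [sum_const, card_erase_of_mem (mem_univ _), card_univ, smul_eq_mul, mul_comm]
    _ ≤ ∑ v ∈ univ.erase (0 : W), hwt (v : ι → F2) :=
        sum_le_sum fun v hv => hd v v.2 (by simpa using (mem_erase.mp hv).1)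
    _ ≤ ∑ v : W, hwt (v : ι → F2) := sum_le_sum_of_subset (erase_subset _ _)

lemma two_mul_sum_hwt (W : Submodule F2 (ι → F2)) [Fintype W] (S : Finset ι)
    (hS : ∀ i, i ∈ S ↔ ∃ w ∈ W, w i ≠ 0) :
    2 * ∑ v : W, hwt (v : ι → F2) = #S * Fintype.card W := by
  classical
  have h_coord : ∀ i, 2 * #{v : W | (v : ι → F2) i ≠ 0}
      = if i ∈ S then Fintype.card W else 0 := by
    intro i
    split_ifs with hi
    · obtain ⟨w, hw, hwi⟩ := (hS i).mp hi
      refine two_mul_card_filter_ne_zero ((LinearMap.proj i).comp W.subtype).toAddMonoidHom ?_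
      exact DFunLike.ne_iff.mpr ⟨⟨w, hw⟩, hwi⟩
    · have h_zero : ∀ w ∈ W, w i = 0 := by simpa [hS] using hi
      simp [h_zero]
  rw [sum_hwt_eq_sum_card_filter, mul_sum, sum_congr rfl fun i _ => h_coord i, sum_ite_mem,
    univ_inter, sum_const, smul_eq_mul]

end Weights

section MatrixCodes

variable {ι : Type} [Fintype ι] [DecidableEq ι] (A : Matrix ι ι F2)

lemma card_Ccol [Fintype (Ccol A)] : Fintype.card (Ccol A) = 2 ^ A.rank := by
  rw [Module.card_eq_pow_finrank (K := F2), ZMod.card, rank_eq_finrank_span_cols]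
  rfl

lemma exists_mem_Ccol_apply_ne_zero_iff (i : ι) : (∃ w ∈ Ccol A, w i ≠ 0) ↔ A.row i ≠ 0 := by
  constructor
  · rintro ⟨w, hw, hwi⟩ hAi
    have h_ker : Ccol A ≤ LinearMap.ker (LinearMap.proj i) :=
      Submodule.span_le.mpr <| Set.range_subset_iff.mpr fun j => congrFun hAi j
    exact hwi (h_ker hw)
  · intro hAi
    obtain ⟨j, hj⟩ := Function.ne_iff.mp hAi
    exact ⟨Aᵀ j, Submodule.subset_span ⟨j, rfl⟩, hj⟩

lemma dcol_le_hwt {v : ι → F2} (hv : v ∈ Ccol A) (hv₀ : v ≠ 0) : dcol A ≤ hwt v :=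
  Nat.sInf_le ⟨v, hv, hv₀, rfl⟩

lemma drow_le_hwt {v : ι → F2} (hv : v ∈ Crow A) (hv₀ : v ≠ 0) : drow A ≤ hwt v :=
  Nat.sInf_le ⟨v, hv, hv₀, rfl⟩

lemma nnz_eq_sum_hwt : nnz A = ∑ i, hwt (A.row i) := by
  simp only [nnz, hwt, card_filter, Fintype.sum_prod_type]
  rfl

lemma card_nonzero_rows_mul_drow_le_nnz : #{i | A.row i ≠ 0} * drow A ≤ nnz A :=
  calc #{i | A.row i ≠ 0} * drow A
      = ∑ _i ∈ univ.filter (fun i => A.row i ≠ 0), drow A := by rw [sum_const, smul_eq_mul]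
    _ ≤ ∑ i ∈ univ.filter (fun i => A.row i ≠ 0), hwt (A.row i) :=
        sum_le_sum fun i hi => drow_le_hwt A (Submodule.subset_span ⟨i, rfl⟩) (mem_filter.mp hi).2
    _ ≤ ∑ i, hwt (A.row i) := sum_le_sum_of_subset (filter_subset _ _)
    _ = nnz A := (nnz_eq_sum_hwt A).symm

lemma two_mul_sum_hwt_Ccol [Fintype (Ccol A)] :
    2 * ∑ v : Ccol A, hwt (v : ι → F2) = #{i | A.row i ≠ 0} * 2 ^ A.rank := by
  rw [two_mul_sum_hwt _ {i | A.row i ≠ 0} fun i => by simp [exists_mem_Ccol_apply_ne_zero_iff],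
    card_Ccol]

end MatrixCodes

theorem improved_nnz_bound_general {m : ℕ} (A : Matrix (Fin m) (Fin m) F2)
    (k : ℕ) (hk : k = A.rank) :
    2 * drow A * dcol A * (2 ^ k - 1) ≤ nnz A * 2 ^ k := by
  subst hk
  let _ : Fintype (Ccol A) := Fintype.ofFinite _
  have h_weights : dcol A * (2 ^ A.rank - 1) ≤ ∑ v : Ccol A, hwt (v : Fin m → F2) := by
    rw [← card_Ccol]
    exact mul_card_sub_one_le_sum_hwt _ _ fun v hv hv₀ => dcol_le_hwt A hv hv₀
  calc 2 * drow A * dcol A * (2 ^ A.rank - 1)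
      = drow A * (2 * (dcol A * (2 ^ A.rank - 1))) := by ring
    _ ≤ drow A * (2 * ∑ v : Ccol A, hwt (v : Fin m → F2)) := by gcongr
    _ = #{i | A.row i ≠ 0} * drow A * 2 ^ A.rank := by rw [two_mul_sum_hwt_Ccol]; ring
    _ ≤ nnz A * 2 ^ A.rank := by gcongr; exact card_nonzero_rows_mul_drow_le_nnz A

/-- For every nonzero binary matrix `A` with `k = rank(A)`:
`2 · drow(A) · dcol(A) · (2^k − 1) ≤ |A| · 2^k`, i.e.
`2 · drow(A) · dcol(A) · (1 − 2^{−k}) ≤ |A|`. -/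
theorem improved_nnz_bound {m : ℕ} (A : Matrix (Fin m) (Fin m) F2) (hA : A ≠ 0)
    (k : ℕ) (hk : k = A.rank) :
    2 * drow A * dcol A * (2 ^ k - 1) ≤ nnz A * 2 ^ k :=
  improved_nnz_bound_general A k hk
end
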